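/- Let (x₁,x₂,x₃) be an admissible triple of real numbers whose orbit under the group generated by β₁ and β₂ is finite, and suppose x₁² + x₂² + x₃² − x₁x₂x₃ ≠ 4. Then x₁² + x₂² + x₃² − x₁x₂x₃ < 4, |xᵢ| < 2 for i = 1,2,3, and the symmetric matrix g = [[2,x₁,x₃],[x₁,2,x₂],[x₃,x₂,2]] is positive definite. -/

import Mathlib

/-- The braid-group generator `β₁`, as a bijection of `ℝ³`. -/
def braidEquiv₁ : Equiv.Perm (ℝ × ℝ × ℝ) where
  toFun p := (-p.1, p.2.2 - p.1 * p.2.1, p.2.1)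
  invFun p := (-p.1, p.2.2, p.2.1 - p.1 * p.2.2)
  left_inv := by rintro ⟨a, b, c⟩; ext <;> simp <;> ring
  right_inv := by rintro ⟨a, b, c⟩; ext <;> simp <;> ring

/-- The braid-group generator `β₂`, as a bijection of `ℝ³`. -/
def braidEquiv₂ : Equiv.Perm (ℝ × ℝ × ℝ) where
  toFun p := (p.2.2, -p.2.1, p.1 - p.2.1 * p.2.2)
  invFun p := (p.2.2 - p.1 * p.2.1, -p.2.1, p.1)
  left_inv := by rintro ⟨a, b, c⟩; ext <;> simp <;> ring
  right_inv := by rintro ⟨a, b, c⟩; ext <;> simp <;> ring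

/-- The braid group: the group of bijections of `ℝ³` generated by `β₁` and `β₂`. -/
def braidSubgroup : Subgroup (Equiv.Perm (ℝ × ℝ × ℝ)) :=
  Subgroup.closure {braidEquiv₁, braidEquiv₂}

/-- A triple is admissible if at most one of its coordinates equals zero. -/
def Admissible (p : ℝ × ℝ × ℝ) : Prop :=
  ¬(p.1 = 0 ∧ p.2.1 = 0) ∧ ¬(p.1 = 0 ∧ p.2.2 = 0) ∧ ¬(p.2.1 = 0 ∧ p.2.2 = 0)

/-- An admissible triple is good if every braid image of it has all coordinates of the
form `-2 cos (π r)` with `r ∈ [0,1]` rational. -/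
def Good (p : ℝ × ℝ × ℝ) : Prop :=
  Admissible p ∧ ∀ g ∈ braidSubgroup, ∃ r₁ r₂ r₃ : ℚ,
    0 ≤ r₁ ∧ r₁ ≤ 1 ∧ 0 ≤ r₂ ∧ r₂ ≤ 1 ∧ 0 ≤ r₃ ∧ r₃ ≤ 1 ∧
    g p = (-2 * Real.cos (Real.pi * r₁), -2 * Real.cos (Real.pi * r₂),
           -2 * Real.cos (Real.pi * r₃))

/-- Two triples are equivalent when one is obtained from the other by changing the signs
of exactly two of the three coordinates (or by changing no signs). -/
def TripleEquiv (p q : ℝ × ℝ × ℝ) : Prop :=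
  q = p ∨ q = (p.1, -p.2.1, -p.2.2) ∨ q = (-p.1, p.2.1, -p.2.2) ∨ q = (-p.1, -p.2.1, p.2.2)

/-!
The cubic `F(x) = x₁² + x₂² + x₃² - x₁x₂x₃` is invariant under the braid group. The square `β₁²`
fixes `x₁` and acts linearly on `(x₂, x₃)` with determinant `1` and trace `2 - x₁²`; if `x₁² ≥ 4`
this action has no periodic vectors other than `0` and (when `x₁² = 4`) the `-1`-eigenvectors,
which are excluded by admissibility and by `F ≠ 4`. Hence every coordinate of every point of a
finite orbit satisfies `xᵢ² < 4`. At a point of the orbit maximizing `x₁² + x₂² + x₃²`, the moves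
`β₁`, `β₂`, `β₁⁻¹` do not increase this sum, which gives `xᵢ²xⱼ² ≤ 2x₁x₂x₃` for all `i ≠ j`,
and together with `xᵢ² < 4` this forces `F ≤ 4`. Finally `2`, `4 - x₁²` and `2(4 - F)` are the
leading principal minors of the Gram matrix.
-/

open Finset MulAction

theorem Function.Periodic.apply_one_eq_neg_of_recurrence {a : ℕ → ℝ} {k : ℕ} {t : ℝ}
    (ha : Function.Periodic a k) (hk : 0 < k) (ht : t ≤ -2)
    (hrec : ∀ n, a (n + 2) + a n = t * a (n + 1)) : a 1 = -a 0 := by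
  set g : ℕ → ℝ := fun n ↦ a n ^ 2 + a (n + 1) * a n
  have hg : g k = g 0 := by
    simp only [g, show a k = a 0 by simpa using ha 0,
      show a (k + 1) = a 1 by simpa [add_comm] using ha 1]
  have henergy : ∑ n ∈ range k, (a (n + 1) + a n) ^ 2 =
      (t + 2) * ∑ n ∈ range k, a (n + 1) ^ 2 :=
    calc ∑ n ∈ range k, (a (n + 1) + a n) ^ 2
        = ∑ n ∈ range k, ((t + 2) * a (n + 1) ^ 2 + (g n - g (n + 1))) :=
          sum_congr rfl fun n _ ↦ by simp only [g]; linear_combination a (n + 1) * hrec n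
      _ = (t + 2) * ∑ n ∈ range k, a (n + 1) ^ 2 := by
          rw [sum_add_distrib, ← mul_sum, sum_range_sub', hg, sub_self, add_zero]
  have hzero : ∑ n ∈ range k, (a (n + 1) + a n) ^ 2 = 0 :=
    le_antisymm (henergy ▸ mul_nonpos_of_nonpos_of_nonneg (by linarith)
      (sum_nonneg fun n _ ↦ sq_nonneg _)) (sum_nonneg fun n _ ↦ sq_nonneg _)
  have h0 := (sum_eq_zero_iff_of_nonneg fun n _ ↦ sq_nonneg _).1 hzero 0 (mem_range.2 hk)
  linarith [pow_eq_zero_iff two_ne_zero |>.1 h0]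

theorem sq_add_sq_add_sq_sub_mul_mul_le_four {x y z : ℝ}
    (hx : x ^ 2 < 4) (hy : y ^ 2 < 4) (hz : z ^ 2 < 4)
    (hxy : x ^ 2 * y ^ 2 ≤ 2 * (x * y * z)) (hyz : y ^ 2 * z ^ 2 ≤ 2 * (x * y * z))
    (hxz : x ^ 2 * z ^ 2 ≤ 2 * (x * y * z)) : x ^ 2 + y ^ 2 + z ^ 2 - x * y * z ≤ 4 := by
  rcases (mul_nonneg (sq_nonneg x) (sq_nonneg y)).trans hxy |>.eq_or_lt with hP | hP
  · have hxy0 : x * y = 0 := by nlinarith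
    have hyz0 : y * z = 0 := by nlinarith
    have hxz0 : x * z = 0 := by nlinarith
    rcases mul_eq_zero.1 hxy0 with rfl | rfl
    · rcases mul_eq_zero.1 hyz0 with rfl | rfl <;> linarith
    · rcases mul_eq_zero.1 hxz0 with rfl | rfl <;> linarith
  · -- `2xyz·z²·(x² + y² + z² - xyz - 4) = -(2xyz - y²z²)(2xyz - x²z²) - (4 - z²)z²(2xyz - x²y²)`
    have hz0 : 0 < z ^ 2 := by
      have : z ≠ 0 := by rintro rfl; simp at hP
      positivity
    nlinarith [mul_nonneg (sub_nonneg.2 hyz) (sub_nonneg.2 hxz),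
      mul_nonneg (mul_nonneg (sub_nonneg.2 hz.le) hz0.le) (sub_nonneg.2 hxy), mul_pos hP hz0]

open Matrix in
theorem posDef_gram_of_sq_lt_four {a b c : ℝ} (ha : a ^ 2 < 4)
    (hF : a ^ 2 + b ^ 2 + c ^ 2 - a * b * c < 4) :
    (!![2, a, c; a, 2, b; c, b, 2] : Matrix (Fin 3) (Fin 3) ℝ).PosDef := by
  rw [posDef_iff_dotProduct_mulVec]
  refine ⟨by ext i j; fin_cases i <;> fin_cases j <;> rfl, fun v hv ↦ ?_⟩
  -- completing squares (`LDLᵀ`): the pivots are `2`, `(4 - a²)/2` and `det / ((4 - a²)/2)`,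
  -- where `det = 2(4 - a² - b² - c² + abc)`
  have hsq : 2 * (4 - a ^ 2) * (star v ⬝ᵥ (!![2, a, c; a, 2, b; c, b, 2] *ᵥ v)) =
      (4 - a ^ 2) * (2 * v 0 + a * v 1 + c * v 2) ^ 2
        + ((4 - a ^ 2) * v 1 + (2 * b - a * c) * v 2) ^ 2
        + 4 * (4 - (a ^ 2 + b ^ 2 + c ^ 2 - a * b * c)) * v 2 ^ 2 := by
    simp only [dotProduct, Pi.star_apply, star_trivial, mulVec, of_apply, cons_val',
      cons_val_fin_one, Fin.sum_univ_three, Fin.isValue, cons_val_zero, cons_val_one,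
      Matrix.cons_val]
    ring
  have h4a : 0 < 4 - a ^ 2 := by linarith
  have hdet : 0 < 4 - (a ^ 2 + b ^ 2 + c ^ 2 - a * b * c) := by linarith
  refine pos_of_mul_pos_right (hsq ▸ ?_) (by positivity : (0 : ℝ) ≤ 2 * (4 - a ^ 2))
  have hA := mul_nonneg h4a.le (sq_nonneg (2 * v 0 + a * v 1 + c * v 2))
  have hB := sq_nonneg ((4 - a ^ 2) * v 1 + (2 * b - a * c) * v 2)
  rcases eq_or_ne (v 2) 0 with h2 | h2
  · rcases eq_or_ne (v 1) 0 with h1 | h1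
    · have h0 : v 0 ≠ 0 := fun h0 ↦ hv (by ext i; fin_cases i <;> assumption)
      simp only [h1, h2]
      nlinarith [mul_pos h4a (pow_two_pos_of_ne_zero h0)]
    · simp only [h2]
      nlinarith [pow_two_pos_of_ne_zero (mul_ne_zero h4a.ne' h1)]
  · nlinarith [mul_pos hdet (pow_two_pos_of_ne_zero h2)]

theorem MulAction.exists_pow_smul_eq_of_finite_orbit {G α : Type*} [Group G] [MulAction G α]
    {p : α} (h : (orbit G p).Finite) (g : G) : ∃ k, 0 < k ∧ g ^ k • p = p := by
  obtain ⟨m, n, hmn, he⟩ :=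
    h.exists_lt_map_eq_of_forall_mem (f := fun n : ℕ ↦ g ^ n • p) fun n ↦ mem_orbit p _
  refine ⟨n - m, Nat.sub_pos_of_lt hmn, smul_left_cancel (g ^ m) ?_⟩
  rw [smul_smul, ← pow_add, Nat.add_sub_cancel' hmn.le]
  exact he.symm

theorem Equiv.Perm.apply_eq_of_mem_closure {α β : Type*} {S : Set (Equiv.Perm α)} {f : α → β}
    (hS : ∀ σ ∈ S, ∀ x, f (σ x) = f x) {σ : Equiv.Perm α} (hσ : σ ∈ Subgroup.closure S)
    (x : α) : f (σ x) = f x := by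
  induction hσ using Subgroup.closure_induction generalizing x with
  | mem σ hσ => exact hS σ hσ x
  | one => rfl
  | mul σ τ _ _ hσ hτ => rw [Equiv.Perm.mul_apply, hσ, hτ]
  | inv σ _ hσ => exact (hσ _).symm.trans (congrArg f (σ.apply_symm_apply x))

@[simp]
theorem braidEquiv₁_apply (x : ℝ × ℝ × ℝ) :
    braidEquiv₁ x = (-x.1, x.2.2 - x.1 * x.2.1, x.2.1) := rfl

@[simp]
theorem braidEquiv₂_apply (x : ℝ × ℝ × ℝ) :
    braidEquiv₂ x = (x.2.2, -x.2.1, x.1 - x.2.1 * x.2.2) := rfl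

@[simp]
theorem braidEquiv₁_symm_apply (x : ℝ × ℝ × ℝ) :
    braidEquiv₁.symm x = (-x.1, x.2.2, x.2.1 - x.1 * x.2.2) := rfl

theorem braidEquiv₁_mem : braidEquiv₁ ∈ braidSubgroup :=
  Subgroup.subset_closure (Set.mem_insert _ _)

theorem braidEquiv₂_mem : braidEquiv₂ ∈ braidSubgroup :=
  Subgroup.subset_closure (Set.mem_insert_of_mem _ rfl)

theorem setOf_exists_mem_braidSubgroup_eq_orbit (p : ℝ × ℝ × ℝ) :
    {q | ∃ g ∈ braidSubgroup, g p = q} = orbit braidSubgroup p := by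
  ext q
  simp [mem_orbit_iff, Subgroup.smul_def, Equiv.Perm.smul_def]

def markovCubic (x : ℝ × ℝ × ℝ) : ℝ := x.1 ^ 2 + x.2.1 ^ 2 + x.2.2 ^ 2 - x.1 * x.2.1 * x.2.2

theorem markovCubic_smul (g : braidSubgroup) (x : ℝ × ℝ × ℝ) :
    markovCubic (g • x) = markovCubic x := by
  refine Equiv.Perm.apply_eq_of_mem_closure ?_ g.2 x
  rintro σ (rfl | rfl) y <;> simp only [braidEquiv₁_apply, braidEquiv₂_apply, markovCubic] <;> ring

theorem admissible_smul_iff (g : braidSubgroup) (x : ℝ × ℝ × ℝ) :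
    Admissible (g • x) ↔ Admissible x := by
  refine Iff.of_eq (Equiv.Perm.apply_eq_of_mem_closure ?_ g.2 x)
  rintro σ (rfl | rfl) ⟨a, b, c⟩ <;>
    simp only [braidEquiv₁_apply, braidEquiv₂_apply, Admissible, eq_iff_iff] <;> grind

theorem sq_fst_lt_four {p : ℝ × ℝ × ℝ} (hadm : Admissible p)
    (hfin : (orbit braidSubgroup p).Finite) (hne : markovCubic p ≠ 4) : p.1 ^ 2 < 4 := by
  by_contra! hc
  -- `γ = β₁²` fixes `x₁` and acts on `(x₂, x₃)` linearly, with determinant `1` and trace `2 - x₁²`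
  let γ : braidSubgroup := ⟨braidEquiv₁ ^ 2, pow_mem braidEquiv₁_mem 2⟩
  have hγ (x : ℝ × ℝ × ℝ) :
      γ • x = (x.1, x.2.1 + x.1 * x.2.2 - x.1 ^ 2 * x.2.1, x.2.2 - x.1 * x.2.1) := by
    change braidEquiv₁ (braidEquiv₁ x) = _
    simp only [braidEquiv₁_apply, neg_neg, Prod.mk.injEq, true_and, and_true]
    ring
  have hfst (n : ℕ) : (γ ^ n • p).1 = p.1 := by
    induction n with
    | zero => simp
    | succ n ih => rw [pow_succ', mul_smul, hγ, ih]
  obtain ⟨k, hk, hper⟩ := exists_pow_smul_eq_of_finite_orbit hfin γ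
  have hanti (f : ℝ × ℝ × ℝ → ℝ) (hf : ∀ x, f (γ • γ • x) + f x = (2 - x.1 ^ 2) * f (γ • x)) :
      f (γ • p) = -f p := by
    have := Function.Periodic.apply_one_eq_neg_of_recurrence (a := fun n ↦ f (γ ^ n • p))
      (t := 2 - p.1 ^ 2)
      (fun n ↦ by simp only [pow_add, mul_smul, hper]) hk (by linarith)
      (fun n ↦ by simp only [pow_succ' γ, mul_smul, hf, hfst])
    simpa using this
  have h₂ := hanti (·.2.1) fun x ↦ by simp only [hγ]; ring
  have h₃ := hanti (·.2.2) fun x ↦ by simp only [hγ]; ring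
  simp only [hγ] at h₂ h₃
  rcases hc.eq_or_lt with h4 | h4
  · refine hne ?_
    unfold markovCubic
    linear_combination (p.2.1 ^ 2 / 2 - 1) * h4 - p.2.1 / 2 * h₂ + p.2.2 / 2 * h₃
  · have ha : p.2.1 = 0 := by
      have : (4 - p.1 ^ 2) * p.2.1 = 0 := by linear_combination 2 * h₂ - p.1 * h₃
      exact (mul_eq_zero.1 this).resolve_left (by linarith)
    exact hadm.2.2 ⟨ha, by linear_combination h₃ / 2 + p.1 / 2 * ha⟩

theorem sq_lt_four_of_mem_orbit {p q : ℝ × ℝ × ℝ} (hadm : Admissible p)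
    (hfin : (orbit braidSubgroup p).Finite) (hne : markovCubic p ≠ 4)
    (hq : q ∈ orbit braidSubgroup p) : q.1 ^ 2 < 4 ∧ q.2.1 ^ 2 < 4 ∧ q.2.2 ^ 2 < 4 := by
  have hfst (h : braidSubgroup) : (h • q).1 ^ 2 < 4 := by
    obtain ⟨g, rfl⟩ := hq
    rw [smul_smul]
    exact sq_fst_lt_four ((admissible_smul_iff _ _).2 hadm) (by rwa [orbit_smul])
      (by rwa [markovCubic_smul])
  let β₁ : braidSubgroup := ⟨braidEquiv₁, braidEquiv₁_mem⟩
  let β₂ : braidSubgroup := ⟨braidEquiv₂, braidEquiv₂_mem⟩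
  -- the first coordinates of `β₂ β₁ q` and `β₁ β₂ q` are `q₂` and `-q₃`
  refine ⟨by simpa using hfst 1, ?_, ?_⟩
  · simpa [β₁, β₂, Subgroup.smul_def] using hfst (β₂ * β₁)
  · simpa [β₁, β₂, Subgroup.smul_def] using hfst (β₁ * β₂)

theorem markovCubic_le_four {p : ℝ × ℝ × ℝ} (hadm : Admissible p)
    (hfin : (orbit braidSubgroup p).Finite) (hne : markovCubic p ≠ 4) : markovCubic p ≤ 4 := by
  obtain ⟨q, hq, hmax⟩ := Set.exists_max_image _
    (fun x : ℝ × ℝ × ℝ ↦ x.1 ^ 2 + x.2.1 ^ 2 + x.2.2 ^ 2) hfin ⟨p, mem_orbit_self p⟩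
  have hnbr {σ} (hσ : σ ∈ braidSubgroup) :=
    hmax (σ q) (mem_orbit_of_mem_orbit (⟨σ, hσ⟩ : braidSubgroup) hq)
  have h₁ := hnbr braidEquiv₁_mem
  have h₂ := hnbr braidEquiv₂_mem
  have h₃ := hnbr (inv_mem braidEquiv₁_mem)
  simp only [Equiv.Perm.inv_def, braidEquiv₁_apply, braidEquiv₂_apply, braidEquiv₁_symm_apply]
    at h₁ h₂ h₃
  obtain ⟨hx, hy, hz⟩ := sq_lt_four_of_mem_orbit hadm hfin hne hq
  obtain ⟨g, rfl⟩ := hq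
  rw [← markovCubic_smul g p]
  exact sq_add_sq_add_sq_sub_mul_mul_le_four hx hy hz
    (by nlinarith) (by nlinarith) (by nlinarith)

/-- If an admissible triple has a finite braid-group orbit and
`x₁² + x₂² + x₃² - x₁x₂x₃ ≠ 4`, then `x₁² + x₂² + x₃² - x₁x₂x₃ < 4`, all `|xᵢ| < 2`,
and the Gram matrix `[[2,x₁,x₃],[x₁,2,x₂],[x₃,x₂,2]]` is positive definite. -/
theorem finite_orbit_gram_posdef (p : ℝ × ℝ × ℝ) (hadm : Admissible p)
    (hfin : Set.Finite {q : ℝ × ℝ × ℝ | ∃ g ∈ braidSubgroup, g p = q})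
    (hne : p.1 ^ 2 + p.2.1 ^ 2 + p.2.2 ^ 2 - p.1 * p.2.1 * p.2.2 ≠ 4) :
    p.1 ^ 2 + p.2.1 ^ 2 + p.2.2 ^ 2 - p.1 * p.2.1 * p.2.2 < 4 ∧
    |p.1| < 2 ∧ |p.2.1| < 2 ∧ |p.2.2| < 2 ∧
    (!![2, p.1, p.2.2; p.1, 2, p.2.1; p.2.2, p.2.1, 2] :
        Matrix (Fin 3) (Fin 3) ℝ).PosDef := by
  rw [setOf_exists_mem_braidSubgroup_eq_orbit] at hfin
  have hlt : markovCubic p < 4 := (markovCubic_le_four hadm hfin hne).lt_of_ne hne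
  obtain ⟨h₁, h₂, h₃⟩ := sq_lt_four_of_mem_orbit hadm hfin hne (mem_orbit_self p)
  have habs {x : ℝ} (hx : x ^ 2 < 4) : |x| < 2 :=
    abs_lt_of_sq_lt_sq (by norm_num; exact hx) zero_le_two
  exact ⟨hlt, habs h₁, habs h₂, habs h₃, posDef_gram_of_sq_lt_four h₁ hlt⟩
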